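/- arXiv:2208.11044 — 2 statements merged into one kernel-verified Lean document; each statement's English description precedes it below -/
import Mathlib

section
/- Suppose n = 2ℓ, δ_ℓ = 1 (split case) and set z := 1 + j in K_ℓ, so z² = 2z. If char F ≠ 2, then every idempotent p ∈ K_ℓ \ {0,1} satisfies κ(p) = 1 − p, and the right K_ℓ-module W := Λ^ℓ V decomposes as the direct sum W = Wp ⊕ W(1−p) of SU(V,h)-submodules. -/
open ExteriorAlgebra

/-- The wedge product of a family of vectors in the exterior algebra. -/
noncomputable def wedgeFam (F : Type*) {V : Type*} [Field F] [AddCommGroup V] [Module F V]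
    {k : ℕ} (u : Fin k → V) : ExteriorAlgebra F V :=
  (List.ofFn fun i => ExteriorAlgebra.ι F (u i)).prod

/-- The element `x₀ + j·x₁` of the algebra `K_ℓ`, realized as the 2×2 matrix
`[[x₀, δ·σ(x₁)], [x₁, σ(x₀)]]` over `F`; here `δ = 1` (split case). -/
def Kmk {F : Type*} [Field F] (σ : F → F) (δ x0 x1 : F) : Matrix (Fin 2) (Fin 2) F :=
  !![x0, δ * σ x1; x1, σ x0]

/-!
If `p = x₀ + j x₁` is an idempotent other than `0, 1`, then `x₁ ≠ 0`, and the `j`-part of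
`p² = p` gives `σ x₀ = 1 - x₀`, i.e. `κ(p) = 1 - p`. The sum `W = W·p + W·(1 - p)` is direct
because right multiplication by `p` fixes `W·p` and kills `W·(1 - p)`. The summands are
`SU(V,h)`-stable because every `g ∈ SU(V,h)` commutes with `J`: `J` is determined by
`b (J x ∧ y) = H x y` and the nondegeneracy of `H` on `Λ^ℓ V` (an orthogonal basis of `V` gives an
orthogonal basis of `Λ^ℓ V`), while `b ∘ Λg = det g • b` in top degree and `H` is `Λg`-invariant
since it is given by Gram determinants.
-/

open Set.powersetCard

section KAlgebra

variable {F : Type*} [Field F]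

theorem coeffs_of_isIdempotentElem_Kmk {σ : F → F} {x0 x1 : F}
    (hp : IsIdempotentElem (Kmk σ 1 x0 x1)) :
    x0 * x0 + σ x1 * x1 = x0 ∧ x1 * x0 + σ x0 * x1 = x1 := by
  rw [IsIdempotentElem, Kmk, Matrix.mul_fin_two] at hp
  exact ⟨by simpa using congrFun (congrFun hp 0) 0, by simpa using congrFun (congrFun hp 1) 0⟩

theorem map_eq_one_sub_of_isIdempotentElem_Kmk {σ : F →+* F} {x0 x1 : F}
    (hp : IsIdempotentElem (Kmk σ 1 x0 x1)) (hp0 : Kmk σ 1 x0 x1 ≠ 0)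
    (hp1 : Kmk σ 1 x0 x1 ≠ 1) : σ x0 = 1 - x0 := by
  obtain ⟨h00, h10⟩ := coeffs_of_isIdempotentElem_Kmk hp
  have hx1 : x1 ≠ 0 := by
    rintro rfl
    rw [map_zero, zero_mul, add_zero] at h00
    rcases (IsIdempotentElem.iff_eq_zero_or_one (p := x0)).mp h00 with rfl | rfl
    · exact hp0 (by ext i j; fin_cases i <;> fin_cases j <;> simp [Kmk])
    · exact hp1 (by ext i j; fin_cases i <;> fin_cases j <;> simp [Kmk])
  have hj : x1 * (x0 + σ x0) = x1 * 1 := by linear_combination h10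
  linear_combination mul_left_cancel₀ hx1 hj

theorem Kmk_conj_eq_one_sub {σ : F →+* F} {x0 x1 : F}
    (hx0 : σ x0 = 1 - x0) : Kmk σ 1 (σ x0) (-x1) = 1 - Kmk σ 1 x0 x1 := by
  ext i j
  fin_cases i <;> fin_cases j <;> simp [Kmk, hx0]

end KAlgebra

section RightAction

variable {F M : Type*} [Field F] [AddCommGroup M] [Module F M] {σ : F →+* F}

/-- The right action `w · (y₀ + j y₁)` of `K_ℓ` on a space with a `σ`-semilinear involution `J`
playing the role of `j`. -/
def rightSMulK (J : M →ₛₗ[σ] M) (w : M) (y0 y1 : F) : M :=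
  y0 • w + y1 • J w

theorem rightSMulK_rightSMulK (J : M →ₛₗ[σ] M) {w : M} (hw : J (J w) = w) (a0 a1 b0 b1 : F) :
    rightSMulK J (rightSMulK J w a0 a1) b0 b1 =
      rightSMulK J w (a0 * b0 + σ a1 * b1) (a1 * b0 + σ a0 * b1) := by
  simp only [rightSMulK, map_add, map_smulₛₗ, hw]
  module

theorem map_rightSMulK (J : M →ₛₗ[σ] M) (φ : M →ₗ[F] M) {w : M} (hφ : φ (J w) = J (φ w))
    (y0 y1 : F) : φ (rightSMulK J w y0 y1) = rightSMulK J (φ w) y0 y1 := by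
  rw [rightSMulK, rightSMulK, map_add, map_smul, map_smul, hφ]

theorem rightSMulK_eq_zero_of_eq (J : M →ₛₗ[σ] M) {x0 x1 : F}
    (h00 : x0 * x0 + σ x1 * x1 = x0) (h10 : x1 * x0 + σ x0 * x1 = x1) (hx0 : σ x0 = 1 - x0)
    {a c : M} (ha : J (J a) = a) (hc : J (J c) = c)
    (hac : rightSMulK J a x0 x1 = rightSMulK J c (1 - x0) (-x1)) :
    rightSMulK J a x0 x1 = 0 :=
  calc rightSMulK J a x0 x1 = rightSMulK J (rightSMulK J a x0 x1) x0 x1 := by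
        rw [rightSMulK_rightSMulK J ha, h00, h10]
    _ = rightSMulK J (rightSMulK J c (1 - x0) (-x1)) x0 x1 := by rw [hac]
    _ = rightSMulK J c 0 0 := by
        rw [rightSMulK_rightSMulK J hc, map_sub, map_one, map_neg, hx0]
        congr 1
        · linear_combination -h00
        · ring
    _ = 0 := by simp [rightSMulK]

end RightAction

theorem det_of_ofFinEmbEquiv_symm_eq_ite {R I : Type*} [CommRing R] [LinearOrder I]
    {k : ℕ} (g : I → I → R) (hg : ∀ i j, i ≠ j → g i j = 0) (s t : Set.powersetCard I k) :
    (Matrix.of fun i j => g (ofFinEmbEquiv.symm s i) (ofFinEmbEquiv.symm t j)).det =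
      if s = t then ∏ i, g (ofFinEmbEquiv.symm s i) (ofFinEmbEquiv.symm s i) else 0 := by
  split_ifs with hst
  · subst hst
    rw [← Matrix.det_diagonal]
    congr 1
    ext i j
    rcases eq_or_ne i j with rfl | hij
    · simp
    · rw [Matrix.diagonal_apply_ne _ hij]
      exact hg _ _ fun hv => hij ((ofFinEmbEquiv.symm s).injective hv)
  · obtain ⟨a, has, hat⟩ := (exists_mem_notMem_iff_ne s t).mp hst
    obtain ⟨r, rfl⟩ := (mem_range_ofFinEmbEquiv_symm_iff_mem s a).mpr has
    refine Matrix.det_eq_zero_of_row_eq_zero r fun j => hg _ _ fun hrj => hat ?_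
    exact hrj ▸ (mem_range_ofFinEmbEquiv_symm_iff_mem t _).mp ⟨j, rfl⟩

theorem Module.Basis.apply_self_ne_zero_of_orthogonal {F V ι : Type*} [Field F] [AddCommGroup V]
    [Module F V] (f : V → V →ₗ[F] F) (hf : ∀ u, (∀ w, f u w = 0) → u = 0)
    (v : Module.Basis ι F V) (horth : ∀ i j, i ≠ j → f (v i) (v j) = 0) (i : ι) :
    f (v i) (v i) ≠ 0 := by
  intro hii
  refine v.ne_zero i (hf _ fun w => ?_)
  have hvanish : f (v i) = 0 := v.ext fun j => by
    rcases eq_or_ne i j with rfl | hij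
    · exact hii
    · exact horth i j hij
  rw [hvanish, LinearMap.zero_apply]

namespace ExteriorAlgebra

section CommRing

variable {R M N : Type*} [CommRing R] [AddCommGroup M] [Module R M] [AddCommGroup N] [Module R N]

theorem map_mem_exteriorPower (f : M →ₗ[R] N) {k : ℕ} {x : ExteriorAlgebra R M}
    (hx : x ∈ ⋀[R]^k M) : map f x ∈ ⋀[R]^k N := by
  have : (⋀[R]^k M).map (map f).toLinearMap ≤ ⋀[R]^k N := by
    rw [Submodule.map_pow, ι_range_map_map]
    exact pow_le_pow_left' LinearMap.map_le_range k
  exact this ⟨x, hx, rfl⟩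

theorem linearMap_map_eq_det_mul {n : ℕ} (v : Module.Basis (Fin n) R M)
    (b : ExteriorAlgebra R M →ₗ[R] R) (f : M →ₗ[R] M) {z : ExteriorAlgebra R M}
    (hz : z ∈ ⋀[R]^n M) : b (map f z) = LinearMap.det f * b z := by
  rw [← ιMulti_span_fixedDegree] at hz
  induction hz using Submodule.span_induction with
  | mem _ hz =>
    obtain ⟨u, rfl⟩ := hz
    have key : ∀ w, b (ιMulti R n w) = b (ιMulti R n v) * v.det w := fun w => by
      conv_lhs => rw [← b.compAlternatingMap_apply, (b.compAlternatingMap _).eq_smul_basis_det v]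
      rfl
    rw [map_apply_ιMulti, key (f ∘ u), key u, v.det_comp]
    ring
  | zero => simp
  | add x y _ _ hx hy => simp only [map_add, hx, hy, mul_add]
  | smul c x _ hx => simp only [map_smul, hx, smul_eq_mul]; ring

theorem sesq_map_map_of_isometry {σ : R →+* R}
    (B : ExteriorAlgebra R M →ₛₗ[σ] ExteriorAlgebra R M →ₗ[R] R) (h : M → M → R)
    (hB : ∀ (k : ℕ) (u w : Fin k → M),
      B (ιMulti R k u) (ιMulti R k w) = (Matrix.of fun i j => h (u i) (w j)).det)
    (g : M →ₗ[R] M) (hg : ∀ u w, h (g u) (g w) = h u w) {k : ℕ} {x y : ExteriorAlgebra R M}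
    (hx : x ∈ ⋀[R]^k M) (hy : y ∈ ⋀[R]^k M) : B (map g x) (map g y) = B x y := by
  rw [← ιMulti_span_fixedDegree] at hx hy
  induction hx, hy using Submodule.span_induction₂ with
  | mem_mem x y hx hy =>
    obtain ⟨u, rfl⟩ := hx
    obtain ⟨w, rfl⟩ := hy
    simp only [map_apply_ιMulti, hB, Function.comp_apply, hg]
  | zero_left => simp
  | zero_right => simp
  | add_left x y z _ _ _ hx hy => simp only [map_add, LinearMap.add_apply, hx, hy]
  | add_right x y z _ _ _ hy hz => simp only [map_add, hy, hz]
  | smul_left c x y _ _ hx => simp only [map_smul, map_smulₛₗ, LinearMap.smul_apply, hx]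
  | smul_right c x y _ _ hx => simp only [map_smul, hx]

end CommRing

variable {F V : Type*} [Field F] [AddCommGroup V] [Module F V] {σ : F →+* F}

theorem eq_zero_of_forall_sesq_eq_zero
    (B : ExteriorAlgebra F V →ₛₗ[σ] ExteriorAlgebra F V →ₗ[F] F) (h : V → V → F)
    (hB : ∀ (k : ℕ) (u w : Fin k → V),
      B (ιMulti F k u) (ιMulti F k w) = (Matrix.of fun i j => h (u i) (w j)).det)
    {I : Type*} [LinearOrder I] [Fintype I] (v : Module.Basis I F V)
    (horth : ∀ i j, i ≠ j → h (v i) (v j) = 0) (hdiag : ∀ i, h (v i) (v i) ≠ 0)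
    {k : ℕ} {x : ExteriorAlgebra F V} (hx : x ∈ ⋀[F]^k V)
    (hx0 : ∀ y ∈ ⋀[F]^k V, B x y = 0) : x = 0 := by
  let e := v.exteriorPower k
  have hgram : ∀ s t, B (e s) (e t) =
      if s = t then ∏ i, h (v (ofFinEmbEquiv.symm s i)) (v (ofFinEmbEquiv.symm s i)) else 0 :=
    fun s t => by
      rw [exteriorPower.basis_apply, exteriorPower.basis_apply]
      exact (hB k _ _).trans <|
        det_of_ofFinEmbEquiv_symm_eq_ite (fun i j => h (v i) (v j)) horth s t
  suffices e.repr ⟨x, hx⟩ = 0 by simpa using congrArg Subtype.val (e.repr.map_eq_zero_iff.mp this)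
  ext s
  have hcoord : B x (e s) = σ (e.repr ⟨x, hx⟩ s) *
      ∏ i, h (v (ofFinEmbEquiv.symm s i)) (v (ofFinEmbEquiv.symm s i)) := by
    have hsum : ∑ t, e.repr ⟨x, hx⟩ t • (e t : ExteriorAlgebra F V) = x := by
      simpa only [Submodule.coe_sum, Submodule.coe_smul] using
        congrArg Subtype.val (e.sum_repr ⟨x, hx⟩)
    conv_lhs => rw [← hsum, map_sum, LinearMap.sum_apply]
    simp [hgram]
  rw [hx0 _ (e s).2, eq_comm, mul_eq_zero, map_eq_zero_iff σ σ.injective] at hcoord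
  exact hcoord.resolve_right (Finset.prod_ne_zero_iff.mpr fun i _ => hdiag _)

section Star

variable {ℓ : ℕ} (B : ExteriorAlgebra F V →ₛₗ[σ] ExteriorAlgebra F V →ₗ[F] F)
  (b : ExteriorAlgebra F V →ₗ[F] F) (J : ExteriorAlgebra F V →ₛₗ[σ] ExteriorAlgebra F V)

theorem eq_zero_of_forall_apply_mul_eq_zero (hJ_mem : ∀ x ∈ ⋀[F]^ℓ V, J x ∈ ⋀[F]^ℓ V)
    (hJ_char : ∀ x ∈ ⋀[F]^ℓ V, ∀ y ∈ ⋀[F]^ℓ V, b (J x * y) = B x y)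
    (hJsq : ∀ x ∈ ⋀[F]^ℓ V, J (J x) = x)
    (hB : ∀ x ∈ ⋀[F]^ℓ V, (∀ y ∈ ⋀[F]^ℓ V, B x y = 0) → x = 0)
    {d : ExteriorAlgebra F V} (hd : d ∈ ⋀[F]^ℓ V) (hd0 : ∀ y ∈ ⋀[F]^ℓ V, b (d * y) = 0) :
    d = 0 := by
  have hJd : J d = 0 := hB _ (hJ_mem d hd) fun y hy => by
    rw [← hJ_char _ (hJ_mem d hd) y hy, hJsq d hd]
    exact hd0 y hy
  rw [← hJsq d hd, hJd, map_zero]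

theorem map_apply_eq_apply_map (g : V ≃ₗ[F] V)
    (hb : ∀ z ∈ ⋀[F]^(ℓ + ℓ) V, b (map g.toLinearMap z) = b z)
    (hBg : ∀ x ∈ ⋀[F]^ℓ V, ∀ y ∈ ⋀[F]^ℓ V,
      B (map g.toLinearMap x) (map g.toLinearMap y) = B x y)
    (hJ_mem : ∀ x ∈ ⋀[F]^ℓ V, J x ∈ ⋀[F]^ℓ V)
    (hJ_char : ∀ x ∈ ⋀[F]^ℓ V, ∀ y ∈ ⋀[F]^ℓ V, b (J x * y) = B x y)
    (hJsq : ∀ x ∈ ⋀[F]^ℓ V, J (J x) = x)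
    (hB : ∀ x ∈ ⋀[F]^ℓ V, (∀ y ∈ ⋀[F]^ℓ V, B x y = 0) → x = 0)
    {x : ExteriorAlgebra F V} (hx : x ∈ ⋀[F]^ℓ V) :
    map g.toLinearMap (J x) = J (map g.toLinearMap x) := by
  have hgx := map_mem_exteriorPower g.toLinearMap hx
  rw [← sub_eq_zero]
  refine eq_zero_of_forall_apply_mul_eq_zero B b J hJ_mem hJ_char hJsq hB
    (sub_mem (map_mem_exteriorPower _ (hJ_mem x hx)) (hJ_mem _ hgx)) fun y hy => ?_
  obtain ⟨y', hy', rfl⟩ : ∃ y' ∈ ⋀[F]^ℓ V, map g.toLinearMap y' = y :=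
    ⟨map g.symm.toLinearMap y, map_mem_exteriorPower _ hy, by
      rw [← AlgHom.comp_apply, map_comp_map, ← LinearEquiv.coe_trans, LinearEquiv.symm_trans_self]
      exact congrFun (congrArg DFunLike.coe map_id) y⟩
  rw [sub_mul, map_sub, sub_eq_zero, ← map_mul, hb _ (SetLike.mul_mem_graded (hJ_mem x hx) hy'),
    hJ_char x hx y' hy', hJ_char _ hgx _ (map_mem_exteriorPower _ hy'), hBg x hx y' hy']

end Star

end ExteriorAlgebra

theorem split_idempotent_decomposition_general
    {F V : Type*} [Field F] [AddCommGroup V] [Module F V]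
    (n ℓ : ℕ) (hn2 : n = 2 * ℓ)
    (σ : F ≃+* F)
    (h : V → V → F)
    (h_add_right : ∀ u w w', h u (w + w') = h u w + h u w')
    (h_smul_right : ∀ (s : F) u w, h u (s • w) = s * h u w)
    (h_nondeg : ∀ u, (∀ w, h u w = 0) → u = 0)
    (v : Module.Basis (Fin n) F V)
    (h_orth : ∀ i j, i ≠ j → h (v i) (v j) = 0)
    (H : ExteriorAlgebra F V → ExteriorAlgebra F V → F)
    (H_add_left : ∀ x x' y, H (x + x') y = H x y + H x' y)
    (H_add_right : ∀ x y y', H x (y + y') = H x y + H x y')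
    (H_smul_left : ∀ (s : F) x y, H (s • x) y = σ s * H x y)
    (H_smul_right : ∀ (s : F) x y, H x (s • y) = s * H x y)
    (H_det : ∀ (k : ℕ) (u w : Fin k → V),
      H (wedgeFam F u) (wedgeFam F w) = Matrix.det (Matrix.of fun i j => h (u i) (w j)))
    (b : ExteriorAlgebra F V →ₗ[F] F)
    (J : ExteriorAlgebra F V → ExteriorAlgebra F V)
    (hJ_mem : ∀ x ∈ ⋀[F]^ℓ V, J x ∈ ⋀[F]^ℓ V)
    (hJ_char : ∀ x ∈ ⋀[F]^ℓ V, ∀ y ∈ ⋀[F]^ℓ V, b (J x * y) = H x y)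
    (hJ_add : ∀ x y, J (x + y) = J x + J y)
    (hJ_smul : ∀ (s : F) x, J (s • x) = σ s • J x)
    -- normalization: b is chosen so that J² = id (δ_ℓ = 1)
    (hJsq : ∀ x ∈ ⋀[F]^ℓ V, J (J x) = x)
    -- p = x₀ + j x₁ is an idempotent of K_ℓ different from 0 and 1
    (x0 x1 : F)
    (hidem : Kmk ⇑σ 1 x0 x1 * Kmk ⇑σ 1 x0 x1 = Kmk ⇑σ 1 x0 x1)
    (hp0 : Kmk ⇑σ 1 x0 x1 ≠ 0) (hp1 : Kmk ⇑σ 1 x0 x1 ≠ 1) :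
    -- κ(p) = 1 − p
    Kmk ⇑σ 1 (σ x0) (-x1) = 1 - Kmk ⇑σ 1 x0 x1 ∧
    -- W = W·p + W·(1−p) …
    (∀ w ∈ ⋀[F]^ℓ V, ∃ a ∈ ⋀[F]^ℓ V, ∃ c ∈ ⋀[F]^ℓ V,
        w = (x0 • a + x1 • J a) + ((1 - x0) • c + (-x1) • J c)) ∧
    -- … and the sum is direct
    (∀ a ∈ ⋀[F]^ℓ V, ∀ c ∈ ⋀[F]^ℓ V,
        x0 • a + x1 • J a = (1 - x0) • c + (-x1) • J c → x0 • a + x1 • J a = 0) ∧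
    -- both summands are SU(V,h)-submodules
    (∀ (g : V ≃ₗ[F] V), (∀ u w : V, h (g u) (g w) = h u w) →
        LinearMap.det (g : V →ₗ[F] V) = 1 →
        (∀ a ∈ ⋀[F]^ℓ V, ∃ a' ∈ ⋀[F]^ℓ V,
          ExteriorAlgebra.map (g : V →ₗ[F] V) (x0 • a + x1 • J a)
            = x0 • a' + x1 • J a') ∧
        (∀ c ∈ ⋀[F]^ℓ V, ∃ c' ∈ ⋀[F]^ℓ V,
          ExteriorAlgebra.map (g : V →ₗ[F] V) ((1 - x0) • c + (-x1) • J c)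
            = (1 - x0) • c' + (-x1) • J c')) := by
  let Jσ : ExteriorAlgebra F V →ₛₗ[(σ : F →+* F)] ExteriorAlgebra F V :=
    { toFun := J, map_add' := hJ_add, map_smul' := hJ_smul }
  let Hσ : ExteriorAlgebra F V →ₛₗ[(σ : F →+* F)] ExteriorAlgebra F V →ₗ[F] F :=
    LinearMap.mk₂'ₛₗ _ _ H H_add_left H_smul_left H_add_right H_smul_right
  obtain ⟨h00, h10⟩ := coeffs_of_isIdempotentElem_Kmk hidem
  have hx0 : σ x0 = 1 - x0 :=
    map_eq_one_sub_of_isIdempotentElem_Kmk (σ := (σ : F →+* F)) hidem hp0 hp1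
  refine ⟨Kmk_conj_eq_one_sub (σ := (σ : F →+* F)) hx0, fun w hw => ⟨w, hw, w, hw, by module⟩,
    fun a ha c hc => rightSMulK_eq_zero_of_eq Jσ h00 h10 hx0 (hJsq a ha) (hJsq c hc),
    fun g hg hdet => ?_⟩
  have hdiag := Module.Basis.apply_self_ne_zero_of_orthogonal
    (fun u => ⟨⟨h u, h_add_right u⟩, fun s w => h_smul_right s u w⟩) h_nondeg v h_orth
  obtain rfl : n = ℓ + ℓ := by omega
  have hcomm : ∀ x ∈ ⋀[F]^ℓ V, map g.toLinearMap (J x) = J (map g.toLinearMap x) :=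
    fun x hx => map_apply_eq_apply_map Hσ b Jσ g
      (fun z hz => by rw [linearMap_map_eq_det_mul v b g hz, hdet, one_mul])
      (fun x hx y hy => sesq_map_map_of_isometry Hσ h H_det g hg hx hy) hJ_mem hJ_char hJsq
      (fun x hx => eq_zero_of_forall_sesq_eq_zero Hσ h H_det v h_orth hdiag hx) hx
  let φ := (map g.toLinearMap).toLinearMap
  exact ⟨fun a ha => ⟨φ a, map_mem_exteriorPower _ ha, map_rightSMulK Jσ φ (hcomm a ha) _ _⟩,
    fun c hc => ⟨φ c, map_mem_exteriorPower _ hc, map_rightSMulK Jσ φ (hcomm c hc) _ _⟩⟩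

/-- in the split case (`n = 2ℓ`, `δ_ℓ = 1`, so `J² = id`) with
`char F ≠ 2`, every idempotent `p = x₀ + j x₁ ∈ K_ℓ \ {0,1}` satisfies
`κ(p) = 1 − p`, and `W = Λ^ℓ V` decomposes as `W = W·p ⊕ W·(1−p)`, a direct sum of
`SU(V,h)`-submodules.  The right action of `y₀ + j y₁ ∈ K_ℓ` on `w ∈ W` is
`w·(y₀ + j y₁) = y₀ • w + y₁ • J w`. -/
theorem split_idempotent_decomposition
    {F V : Type*} [Field F] [AddCommGroup V] [Module F V] [FiniteDimensional F V]
    (hchar : ringChar F ≠ 2)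
    (n ℓ : ℕ) (hfr : Module.finrank F V = n) (hn2 : n = 2 * ℓ)
    (σ : F ≃+* F) (hσ : ∀ a, σ (σ a) = a)
    (h : V → V → F)
    (h_add_left : ∀ u u' w, h (u + u') w = h u w + h u' w)
    (h_add_right : ∀ u w w', h u (w + w') = h u w + h u w')
    (h_smul_left : ∀ (s : F) u w, h (s • u) w = σ s * h u w)
    (h_smul_right : ∀ (s : F) u w, h u (s • w) = s * h u w)
    (h_herm : ∀ u w, h w u = σ (h u w))
    (h_nondeg : ∀ u, (∀ w, h u w = 0) → u = 0)
    (v : Module.Basis (Fin n) F V)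
    (h_orth : ∀ i j, i ≠ j → h (v i) (v j) = 0)
    (H : ExteriorAlgebra F V → ExteriorAlgebra F V → F)
    (H_add_left : ∀ x x' y, H (x + x') y = H x y + H x' y)
    (H_add_right : ∀ x y y', H x (y + y') = H x y + H x y')
    (H_smul_left : ∀ (s : F) x y, H (s • x) y = σ s * H x y)
    (H_smul_right : ∀ (s : F) x y, H x (s • y) = s * H x y)
    (H_det : ∀ (k : ℕ) (u w : Fin k → V),
      H (wedgeFam F u) (wedgeFam F w) = Matrix.det (Matrix.of fun i j => h (u i) (w j)))
    (H_cross : ∀ (k m : ℕ), k ≠ m → ∀ x ∈ ⋀[F]^k V, ∀ y ∈ ⋀[F]^m V, H x y = 0)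
    (b : ExteriorAlgebra F V →ₗ[F] F)
    (hb_inj : ∀ z ∈ ⋀[F]^n V, b z = 0 → z = 0)
    (hb_off : ∀ (k : ℕ), k ≠ n → ∀ z ∈ ⋀[F]^k V, b z = 0)
    (J : ExteriorAlgebra F V → ExteriorAlgebra F V)
    (hJ_mem : ∀ x ∈ ⋀[F]^ℓ V, J x ∈ ⋀[F]^ℓ V)
    (hJ_char : ∀ x ∈ ⋀[F]^ℓ V, ∀ y ∈ ⋀[F]^ℓ V, b (J x * y) = H x y)
    (hJ_add : ∀ x y, J (x + y) = J x + J y)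
    (hJ_smul : ∀ (s : F) x, J (s • x) = σ s • J x)
    -- normalization: b is chosen so that J² = id (δ_ℓ = 1)
    (hJsq : ∀ x ∈ ⋀[F]^ℓ V, J (J x) = x)
    -- p = x₀ + j x₁ is an idempotent of K_ℓ different from 0 and 1
    (x0 x1 : F)
    (hidem : Kmk ⇑σ 1 x0 x1 * Kmk ⇑σ 1 x0 x1 = Kmk ⇑σ 1 x0 x1)
    (hp0 : Kmk ⇑σ 1 x0 x1 ≠ 0) (hp1 : Kmk ⇑σ 1 x0 x1 ≠ 1) :
    -- κ(p) = 1 − p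
    Kmk ⇑σ 1 (σ x0) (-x1) = 1 - Kmk ⇑σ 1 x0 x1 ∧
    -- W = W·p + W·(1−p) …
    (∀ w ∈ ⋀[F]^ℓ V, ∃ a ∈ ⋀[F]^ℓ V, ∃ c ∈ ⋀[F]^ℓ V,
        w = (x0 • a + x1 • J a) + ((1 - x0) • c + (-x1) • J c)) ∧
    -- … and the sum is direct
    (∀ a ∈ ⋀[F]^ℓ V, ∀ c ∈ ⋀[F]^ℓ V,
        x0 • a + x1 • J a = (1 - x0) • c + (-x1) • J c → x0 • a + x1 • J a = 0) ∧
    -- both summands are SU(V,h)-submodules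
    (∀ (g : V ≃ₗ[F] V), (∀ u w : V, h (g u) (g w) = h u w) →
        LinearMap.det (g : V →ₗ[F] V) = 1 →
        (∀ a ∈ ⋀[F]^ℓ V, ∃ a' ∈ ⋀[F]^ℓ V,
          ExteriorAlgebra.map (g : V →ₗ[F] V) (x0 • a + x1 • J a)
            = x0 • a' + x1 • J a') ∧
        (∀ c ∈ ⋀[F]^ℓ V, ∃ c' ∈ ⋀[F]^ℓ V,
          ExteriorAlgebra.map (g : V →ₗ[F] V) ((1 - x0) • c + (-x1) • J c)
            = (1 - x0) • c' + (-x1) • J c')) :=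
  split_idempotent_decomposition_general n ℓ hn2 σ h h_add_right h_smul_right h_nondeg v h_orth H
    H_add_left H_add_right H_smul_left H_smul_right H_det b J hJ_mem hJ_char hJ_add hJ_smul hJsq x0
    x1 hidem hp0 hp1
end

section
/- Define g: Λ^ℓ V × Λ^ℓ V → K_ℓ by g(u,v) := Λ^ℓ h(u,v) + j·(−1)^ℓ·Pf(u,v) (n = 2ℓ). Then g is K_ℓ-linear in the right argument, σ-semilinear in the left argument over F, and g(v,u) = α(g(u,v)) where α(x_0 + j x_1) := σ(x_0) + (−1)^ℓ j x_1; i.e., g is an α-hermitian form on the right K_ℓ-module Λ^ℓ V. -/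
/-!
On decomposable ℓ-vectors `Λ^ℓ h` is the Gram determinant of the σ-hermitian form `h`, so it is
σ-hermitian on all of `Λ^ℓ V`; the Pfaffian part `b (x * y)` picks up the sign
`(-1)^(ℓ·ℓ) = (-1)^ℓ` of graded commutativity when its arguments are swapped. The defining identity
`b (J x * y) = Λ^ℓ h (x, y)` together with `J² = δ` exchanges the two components of `g` under
`Y ↦ Y·j = J Y`, which is exactly `K_ℓ`-linearity in the right argument.
-/

open ExteriorAlgebra

namespace ExteriorAlgebra

variable {R M : Type*} [CommRing R] [AddCommGroup M] [Module R M]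

theorem ι_mul_comm_of_mem_exteriorPower (a : M) {m : ℕ} {y : ExteriorAlgebra R M}
    (hy : y ∈ ⋀[R]^m M) : ι R a * y = (-1 : R) ^ m • (y * ι R a) := by
  induction hy using Submodule.pow_induction_on_left' with
  | algebraMap r => simp [Algebra.commutes]
  | add x y i hx hy ihx ihy => rw [mul_add, ihx, ihy, add_mul, smul_add]
  | mem_mul c hc i x hx ih =>
    obtain ⟨c, rfl⟩ := hc
    have anticomm : ι R a * ι R c = -(ι R c * ι R a) :=
      eq_neg_of_add_eq_zero_left (ι_add_mul_swap a c)
    rw [← mul_assoc, anticomm, neg_mul, mul_assoc, ih, mul_smul_comm, ← neg_smul, pow_succ,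
      mul_neg_one, mul_assoc]

theorem mul_comm_of_mem_exteriorPower {k m : ℕ} {x y : ExteriorAlgebra R M}
    (hx : x ∈ ⋀[R]^k M) (hy : y ∈ ⋀[R]^m M) : x * y = (-1 : R) ^ (k * m) • (y * x) := by
  induction hx using Submodule.pow_induction_on_left' with
  | algebraMap r => simp [Algebra.commutes]
  | add x x' i hx hx' ih ih' => rw [add_mul, ih, ih', mul_add, smul_add]
  | mem_mul a ha i x hx ih =>
    obtain ⟨a, rfl⟩ := ha
    rw [mul_assoc, ih, mul_smul_comm, ← mul_assoc, ι_mul_comm_of_mem_exteriorPower a hy,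
      smul_mul_assoc, smul_smul, ← pow_add, mul_assoc, Nat.succ_mul]

end ExteriorAlgebra

theorem neg_one_pow_mul_self {R : Type*} [Monoid R] [HasDistribNeg R] (ℓ : ℕ) :
    (-1 : R) ^ (ℓ * ℓ) = (-1 : R) ^ ℓ := by
  rcases Nat.even_or_odd ℓ with hℓ | hℓ
  · rw [(hℓ.mul_left ℓ).neg_one_pow, hℓ.neg_one_pow]
  · rw [(hℓ.mul hℓ).neg_one_pow, hℓ.neg_one_pow]

theorem LinearMap.apply_swap_eq_of_mem_span {R M : Type*} [CommRing R] [AddCommGroup M]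
    [Module R M] {σ : R ≃+* R} (hσ : ∀ a, σ (σ a) = a) (B : M →ₛₗ[(σ : R →+* R)] M →ₗ[R] R)
    {s : Set M} (hs : ∀ x ∈ s, ∀ y ∈ s, B y x = σ (B x y)) {x y : M}
    (hx : x ∈ Submodule.span R s) (hy : y ∈ Submodule.span R s) : B y x = σ (B x y) := by
  induction hx using Submodule.span_induction generalizing y with
  | mem x hx =>
    induction hy using Submodule.span_induction with
    | mem y hy => exact hs x hx y hy
    | zero => simp
    | add y y' _ _ ih ih' => simp [ih, ih']
    | smul c y _ ih => simp [ih]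
  | zero => simp
  | add x x' _ _ ih ih' => simp [ih hy, ih' hy]
  | smul c x _ ih => simp [ih hy, hσ]

theorem det_gram_swap {F V : Type*} [Field F] (σ : F ≃+* F) (h : V → V → F)
    (h_herm : ∀ u w, h w u = σ (h u w)) {k : ℕ} (u w : Fin k → V) :
    (Matrix.of fun i j => h (w i) (u j)).det = σ (Matrix.of fun i j => h (u i) (w j)).det := by
  rw [σ.map_det, ← Matrix.det_transpose]
  congr 1
  ext i j
  exact h_herm (u i) (w j)

section Kmk

variable {F : Type*} [Field F] (σ : F ≃+* F) (δ : F)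

theorem Kmk_add (a c a' c' : F) :
    Kmk σ δ (a + a') (c + c') = Kmk σ δ a c + Kmk σ δ a' c' := by
  ext i j
  fin_cases i <;> fin_cases j <;> simp [Kmk, mul_add]

theorem Kmk_mul (hσ : ∀ a, σ (σ a) = a) (hδ : σ δ = δ) (a c y0 y1 : F) :
    Kmk σ δ a c * Kmk σ δ y0 y1 = Kmk σ δ (a * y0 + δ * σ c * y1) (c * y0 + σ a * y1) := by
  ext i j
  fin_cases i <;> fin_cases j <;> simp [Kmk, Matrix.mul_apply, hσ, hδ] <;> ring

end Kmk

theorem g_is_alpha_hermitian_general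
    {F V : Type*} [Field F] [AddCommGroup V] [Module F V]
    (ℓ : ℕ)
    (σ : F ≃+* F) (hσ : ∀ a, σ (σ a) = a)
    (h : V → V → F)
    (h_herm : ∀ u w, h w u = σ (h u w))
    (H : ExteriorAlgebra F V → ExteriorAlgebra F V → F)
    (H_add_left : ∀ x x' y, H (x + x') y = H x y + H x' y)
    (H_add_right : ∀ x y y', H x (y + y') = H x y + H x y')
    (H_smul_left : ∀ (s : F) x y, H (s • x) y = σ s * H x y)
    (H_smul_right : ∀ (s : F) x y, H x (s • y) = s * H x y)
    (H_det : ∀ (k : ℕ) (u w : Fin k → V),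
      H (wedgeFam F u) (wedgeFam F w) = Matrix.det (Matrix.of fun i j => h (u i) (w j)))
    (b : ExteriorAlgebra F V →ₗ[F] F)
    (J : ExteriorAlgebra F V → ExteriorAlgebra F V)
    (hJ_mem : ∀ x ∈ ⋀[F]^ℓ V, J x ∈ ⋀[F]^ℓ V)
    (hJ_char : ∀ x ∈ ⋀[F]^ℓ V, ∀ y ∈ ⋀[F]^ℓ V, b (J x * y) = H x y)
    (δ : F) (hδR : σ δ = δ)
    (hJsq : ∀ x ∈ ⋀[F]^ℓ V, J (J x) = δ • x) :
    ∀ X ∈ ⋀[F]^ℓ V, ∀ Y ∈ ⋀[F]^ℓ V,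
      -- additive in the right argument
      (∀ Y' ∈ ⋀[F]^ℓ V,
        Kmk ⇑σ δ (H X (Y + Y')) ((-1 : F) ^ ℓ * b (X * (Y + Y')))
          = Kmk ⇑σ δ (H X Y) ((-1 : F) ^ ℓ * b (X * Y))
            + Kmk ⇑σ δ (H X Y') ((-1 : F) ^ ℓ * b (X * Y'))) ∧
      -- additive in the left argument
      (∀ X' ∈ ⋀[F]^ℓ V,
        Kmk ⇑σ δ (H (X + X') Y) ((-1 : F) ^ ℓ * b ((X + X') * Y))
          = Kmk ⇑σ δ (H X Y) ((-1 : F) ^ ℓ * b (X * Y))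
            + Kmk ⇑σ δ (H X' Y) ((-1 : F) ^ ℓ * b (X' * Y))) ∧
      -- K_ℓ-linear in the right argument: g(X, Y·(y₀ + j y₁)) = g(X,Y)·(y₀ + j y₁)
      (∀ y0 y1 : F,
        Kmk ⇑σ δ (H X (y0 • Y + y1 • J Y))
            ((-1 : F) ^ ℓ * b (X * (y0 • Y + y1 • J Y)))
          = Kmk ⇑σ δ (H X Y) ((-1 : F) ^ ℓ * b (X * Y)) * Kmk ⇑σ δ y0 y1) ∧
      -- σ-semilinear in the left argument: g(s•X, Y) = σ(s)·g(X,Y)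
      (∀ s : F,
        Kmk ⇑σ δ (H (s • X) Y) ((-1 : F) ^ ℓ * b ((s • X) * Y))
          = Kmk ⇑σ δ (σ s) 0 * Kmk ⇑σ δ (H X Y) ((-1 : F) ^ ℓ * b (X * Y))) ∧
      -- α-hermitian: g(Y,X) = α(g(X,Y))
      (Kmk ⇑σ δ (H Y X) ((-1 : F) ^ ℓ * b (Y * X))
        = Kmk ⇑σ δ (σ (H X Y)) ((-1 : F) ^ ℓ * ((-1 : F) ^ ℓ * b (X * Y)))) := by
  let B : ExteriorAlgebra F V →ₛₗ[(σ : F →+* F)] ExteriorAlgebra F V →ₗ[F] F :=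
    LinearMap.mk₂'ₛₗ _ _ H H_add_left H_smul_left H_add_right H_smul_right
  have H_herm : ∀ x ∈ ⋀[F]^ℓ V, ∀ y ∈ ⋀[F]^ℓ V, H y x = σ (H x y) := by
    rw [← ιMulti_span_fixedDegree]
    refine fun x hx y hy => LinearMap.apply_swap_eq_of_mem_span (B := B) hσ ?_ hx hy
    rintro _ ⟨u, rfl⟩ _ ⟨w, rfl⟩
    exact (H_det ℓ w u).trans <|
      (det_gram_swap σ h h_herm u w).trans (congrArg σ (H_det ℓ u w).symm)
  intro X hX Y hY
  have b_swap : ∀ x ∈ ⋀[F]^ℓ V, ∀ y ∈ ⋀[F]^ℓ V,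
      b (y * x) = (-1 : F) ^ ℓ * b (x * y) := fun x hx y hy => by
    rw [mul_comm_of_mem_exteriorPower hy hx, map_smul, smul_eq_mul, neg_one_pow_mul_self]
  have b_J : (-1 : F) ^ ℓ * b (X * J Y) = σ (H X Y) := by
    rw [← b_swap _ hX _ (hJ_mem Y hY), hJ_char Y hY X hX, H_herm X hX Y hY]
  have H_J : H X (J Y) = δ * σ ((-1 : F) ^ ℓ * b (X * Y)) := by
    rw [H_herm _ (hJ_mem Y hY) X hX, ← hJ_char _ (hJ_mem Y hY) X hX, hJsq Y hY, smul_mul_assoc,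
      map_smul, smul_eq_mul, map_mul, hδR, b_swap X hX Y hY]
  refine ⟨fun Y' _ => ?_, fun X' _ => ?_, fun y0 y1 => ?_, fun s => ?_, ?_⟩
  · rw [H_add_right, mul_add, map_add, mul_add, Kmk_add]
  · rw [H_add_left, add_mul, map_add, mul_add, Kmk_add]
  · rw [Kmk_mul σ δ hσ hδR, H_add_right, H_smul_right, H_smul_right, H_J, mul_add,
      mul_smul_comm, mul_smul_comm, map_add, map_smul, map_smul, smul_eq_mul, smul_eq_mul]
    congr 1
    · ring
    · linear_combination y1 * b_J
  · rw [Kmk_mul σ δ hσ hδR, H_smul_left, smul_mul_assoc, map_smul, smul_eq_mul, map_zero, hσ]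
    congr 1 <;> ring
  · rw [H_herm X hX Y hY, b_swap X hX Y hY]

/-- the form `g(u,v) := Λ^ℓh(u,v) + j·(−1)^ℓ·Pf(u,v)` (values in
`K_ℓ = F ⊕ jF`, `n = 2ℓ`) is additive in both arguments, `K_ℓ`-linear in the right
argument, `σ`-semilinear in the left argument, and satisfies `g(v,u) = α(g(u,v))`
where `α(x₀ + j x₁) = σ(x₀) + (−1)^ℓ j x₁`; i.e. `g` is an `α`-hermitian form on the
right `K_ℓ`-module `Λ^ℓ V` (with `w·(y₀ + j y₁) = y₀ • w + y₁ • J w`). -/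
theorem g_is_alpha_hermitian
    {F V : Type*} [Field F] [AddCommGroup V] [Module F V] [FiniteDimensional F V]
    (n ℓ : ℕ) (hfr : Module.finrank F V = n) (hn2 : n = 2 * ℓ)
    (σ : F ≃+* F) (hσ : ∀ a, σ (σ a) = a)
    (h : V → V → F)
    (h_add_left : ∀ u u' w, h (u + u') w = h u w + h u' w)
    (h_add_right : ∀ u w w', h u (w + w') = h u w + h u w')
    (h_smul_left : ∀ (s : F) u w, h (s • u) w = σ s * h u w)
    (h_smul_right : ∀ (s : F) u w, h u (s • w) = s * h u w)
    (h_herm : ∀ u w, h w u = σ (h u w))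
    (h_nondeg : ∀ u, (∀ w, h u w = 0) → u = 0)
    (v : Module.Basis (Fin n) F V)
    (h_orth : ∀ i j, i ≠ j → h (v i) (v j) = 0)
    (H : ExteriorAlgebra F V → ExteriorAlgebra F V → F)
    (H_add_left : ∀ x x' y, H (x + x') y = H x y + H x' y)
    (H_add_right : ∀ x y y', H x (y + y') = H x y + H x y')
    (H_smul_left : ∀ (s : F) x y, H (s • x) y = σ s * H x y)
    (H_smul_right : ∀ (s : F) x y, H x (s • y) = s * H x y)
    (H_det : ∀ (k : ℕ) (u w : Fin k → V),
      H (wedgeFam F u) (wedgeFam F w) = Matrix.det (Matrix.of fun i j => h (u i) (w j)))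
    (H_cross : ∀ (k m : ℕ), k ≠ m → ∀ x ∈ ⋀[F]^k V, ∀ y ∈ ⋀[F]^m V, H x y = 0)
    (b : ExteriorAlgebra F V →ₗ[F] F)
    (hb_inj : ∀ z ∈ ⋀[F]^n V, b z = 0 → z = 0)
    (hb_off : ∀ (k : ℕ), k ≠ n → ∀ z ∈ ⋀[F]^k V, b z = 0)
    (J : ExteriorAlgebra F V → ExteriorAlgebra F V)
    (hJ_mem : ∀ x ∈ ⋀[F]^ℓ V, J x ∈ ⋀[F]^ℓ V)
    (hJ_char : ∀ x ∈ ⋀[F]^ℓ V, ∀ y ∈ ⋀[F]^ℓ V, b (J x * y) = H x y)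
    (hJ_add : ∀ x y, J (x + y) = J x + J y)
    (hJ_smul : ∀ (s : F) x, J (s • x) = σ s • J x)
    (δ : F) (hδR : σ δ = δ) (hδ0 : δ ≠ 0)
    (hJsq : ∀ x ∈ ⋀[F]^ℓ V, J (J x) = δ • x) :
    ∀ X ∈ ⋀[F]^ℓ V, ∀ Y ∈ ⋀[F]^ℓ V,
      -- additive in the right argument
      (∀ Y' ∈ ⋀[F]^ℓ V,
        Kmk ⇑σ δ (H X (Y + Y')) ((-1 : F) ^ ℓ * b (X * (Y + Y')))
          = Kmk ⇑σ δ (H X Y) ((-1 : F) ^ ℓ * b (X * Y))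
            + Kmk ⇑σ δ (H X Y') ((-1 : F) ^ ℓ * b (X * Y'))) ∧
      -- additive in the left argument
      (∀ X' ∈ ⋀[F]^ℓ V,
        Kmk ⇑σ δ (H (X + X') Y) ((-1 : F) ^ ℓ * b ((X + X') * Y))
          = Kmk ⇑σ δ (H X Y) ((-1 : F) ^ ℓ * b (X * Y))
            + Kmk ⇑σ δ (H X' Y) ((-1 : F) ^ ℓ * b (X' * Y))) ∧
      -- K_ℓ-linear in the right argument: g(X, Y·(y₀ + j y₁)) = g(X,Y)·(y₀ + j y₁)
      (∀ y0 y1 : F,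
        Kmk ⇑σ δ (H X (y0 • Y + y1 • J Y))
            ((-1 : F) ^ ℓ * b (X * (y0 • Y + y1 • J Y)))
          = Kmk ⇑σ δ (H X Y) ((-1 : F) ^ ℓ * b (X * Y)) * Kmk ⇑σ δ y0 y1) ∧
      -- σ-semilinear in the left argument: g(s•X, Y) = σ(s)·g(X,Y)
      (∀ s : F,
        Kmk ⇑σ δ (H (s • X) Y) ((-1 : F) ^ ℓ * b ((s • X) * Y))
          = Kmk ⇑σ δ (σ s) 0 * Kmk ⇑σ δ (H X Y) ((-1 : F) ^ ℓ * b (X * Y))) ∧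
      -- α-hermitian: g(Y,X) = α(g(X,Y))
      (Kmk ⇑σ δ (H Y X) ((-1 : F) ^ ℓ * b (Y * X))
        = Kmk ⇑σ δ (σ (H X Y)) ((-1 : F) ^ ℓ * ((-1 : F) ^ ℓ * b (X * Y)))) :=
  g_is_alpha_hermitian_general ℓ σ hσ h h_herm H H_add_left H_add_right H_smul_left H_smul_right
    H_det b J hJ_mem hJ_char δ hδR hJsq
end
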